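/- arXiv:2309.02424 — 4 statements merged into one kernel-verified Lean document; each statement's English description precedes it below -/
import Mathlib

section
/- Let G = F_2^n, let d be an integer with 1 ≤ d ≤ n, and let S ⊆ G \ {0} satisfy |S|·(2^d − 1) < 2^n − 1. Then there exists a linear subspace V ≤ G with dim(V) ≥ d and V ∩ S = ∅. -/
/-- Bose–Burton type lemma: let `G = F_2^n`, `1 ≤ d ≤ n`, and
`S ⊆ G \ {0}` with `|S|·(2^d − 1) < 2^n − 1`. Then there is a subspace `V ≤ G` with
`dim V ≥ d` and `V ∩ S = ∅`. -/
theorem stmt_8 (n d : ℕ) (hd : 1 ≤ d) (hdn : d ≤ n)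
    (S : Set (Fin n → ZMod 2)) (hS0 : S ⊆ {x | x ≠ 0})
    (hcard : S.ncard * (2 ^ d - 1) < 2 ^ n - 1) :
    ∃ V : Submodule (ZMod 2) (Fin n → ZMod 2),
      d ≤ Module.finrank (ZMod 2) V ∧ (V : Set (Fin n → ZMod 2)) ∩ S = ∅ := by
  classical
  set m := S.ncard with hm
  -- key counting inequality
  have hkey : ∀ k, k < d → (m + 1) * 2 ^ k < 2 ^ n := by
    intro k hk
    have h2 : (2:ℕ) ^ k ≤ 2 ^ (d-1) := Nat.pow_le_pow_right (by norm_num) (by omega)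
    have hstep : (m + 1) * 2 ^ (d-1) < 2 ^ n := by
      rcases Nat.eq_zero_or_pos m with h0 | h1
      · have : (2:ℕ) ^ (d-1) < 2 ^ n := Nat.pow_lt_pow_right (by norm_num) (by omega)
        simpa [h0] using this
      · set P := (2:ℕ) ^ (d-1) with hP
        have hP1 : 1 ≤ P := Nat.one_le_two_pow
        have hdd : (2:ℕ) ^ d = 2 * P := by
          rw [hP, ← pow_succ']
          congr 1
          omega
        set Q := (2:ℕ) ^ d - 1 with hQdef
        have hQ : Q + 1 = 2 * P := by
          have h2d : (1:ℕ) ≤ 2 ^ d := Nat.one_le_two_pow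
          omega
        have h2n : (2:ℕ) ≤ 2 ^ n := by
          calc (2:ℕ) = 2 ^ 1 := (pow_one 2).symm
            _ ≤ 2 ^ n := Nat.pow_le_pow_right (by norm_num) (by omega)
        have hcard2 : m * Q + 2 ≤ 2 ^ n := by omega
        have hq : P + m ≤ m * P + 1 := by
          rcases Nat.lt_or_ge m 2 with hm2 | hm2
          · have hm1 : m = 1 := by omega
            rw [hm1, one_mul]
          · rcases Nat.lt_or_ge P 2 with hP2 | hP2
            · have hP1' : P = 1 := by omega
              rw [hP1', mul_one]
              omega
            · have := Nat.add_le_mul hm2 hP2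
              omega
        have hmQ : m * Q + m = 2 * (m * P) := by
          calc m * Q + m = m * (Q + 1) := by ring
            _ = m * (2 * P) := by rw [hQ]
            _ = 2 * (m * P) := by ring
        have hgoal : (m + 1) * P ≤ m * Q + 1 := by
          have hexp : (m + 1) * P = m * P + P := by ring
          omega
        omega
    calc (m + 1) * 2 ^ k ≤ (m + 1) * 2 ^ (d-1) := Nat.mul_le_mul_left _ h2
      _ < 2 ^ n := hstep
  have hcardG : Nat.card (Fin n → ZMod 2) = 2 ^ n := by
    simp [Nat.card_eq_fintype_card]
  -- main induction
  have main : ∀ k, k ≤ d → ∃ V : Submodule (ZMod 2) (Fin n → ZMod 2),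
      Module.finrank (ZMod 2) V = k ∧ (V : Set (Fin n → ZMod 2)) ∩ S = ∅ := by
    intro k
    induction k with
    | zero =>
      intro _
      refine ⟨⊥, finrank_bot _ _, ?_⟩
      ext x
      simp only [Submodule.bot_coe, Set.mem_inter_iff, Set.mem_singleton_iff,
        Set.mem_empty_iff_false, iff_false, not_and]
      rintro rfl hx
      exact hS0 hx rfl
    | succ k ih =>
      intro hk
      obtain ⟨V, hVr, hVS⟩ := ih (by omega)
      have hVcard : (V : Set (Fin n → ZMod 2)).ncard = 2 ^ k := by
        rw [← Nat.card_coe_set_eq]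
        have h1 : Nat.card V = 2 ^ k := by
          have h2 := Module.card_eq_pow_finrank (K := ZMod 2) (V := V)
          rw [Nat.card_eq_fintype_card, h2, hVr, ZMod.card]
        simpa using h1
      set B : Set (Fin n → ZMod 2) :=
        (fun p : (Fin n → ZMod 2) × (Fin n → ZMod 2) => p.1 + p.2) ''
          ((insert 0 S) ×ˢ (V : Set (Fin n → ZMod 2))) with hB
      have hBfin : ((insert (0:Fin n → ZMod 2) S) ×ˢ (V : Set (Fin n → ZMod 2))).Finite :=
        Set.toFinite _
      have hBcard : B.ncard < 2 ^ n := by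
        have h1 : B.ncard ≤ ((insert (0:Fin n → ZMod 2) S) ×ˢ
            (V : Set (Fin n → ZMod 2))).ncard := Set.ncard_image_le hBfin
        have h2 : ((insert (0:Fin n → ZMod 2) S) ×ˢ (V : Set (Fin n → ZMod 2))).ncard
            = (insert (0:Fin n → ZMod 2) S).ncard * (V : Set (Fin n → ZMod 2)).ncard := by
          rw [← Nat.card_coe_set_eq, ← Nat.card_coe_set_eq, ← Nat.card_coe_set_eq,
            ← Nat.card_prod]
          exact Nat.card_congr (Equiv.Set.prod _ _)
        have h3 : (insert (0:Fin n → ZMod 2) S).ncard ≤ m + 1 := by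
          rw [hm]; exact Set.ncard_insert_le _ _
        calc B.ncard ≤ (insert (0:Fin n → ZMod 2) S).ncard *
              (V : Set (Fin n → ZMod 2)).ncard := h1.trans h2.le
          _ ≤ (m + 1) * 2 ^ k := by rw [hVcard]; exact Nat.mul_le_mul_right _ h3
          _ < 2 ^ n := hkey k (by omega)
      have hBne : B ≠ Set.univ := by
        intro h
        rw [h, Set.ncard_univ, hcardG] at hBcard
        omega
      obtain ⟨x, hx⟩ : ∃ x : Fin n → ZMod 2, x ∉ B := by
        by_contra h
        push_neg at h
        exact hBne (Set.eq_univ_of_forall h)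
      have hxV : x ∉ V := by
        intro hxV
        exact hx ⟨(0, x), ⟨Set.mem_insert _ _, hxV⟩, by simp⟩
      have hx0 : x ≠ 0 := fun h => hxV (h ▸ V.zero_mem)
      refine ⟨V ⊔ Submodule.span (ZMod 2) {x}, ?_, ?_⟩
      · have hinf : V ⊓ Submodule.span (ZMod 2) {x} = ⊥ := by
          rw [Submodule.eq_bot_iff]
          rintro y ⟨hy1, hy2⟩
          obtain ⟨c, rfl⟩ := Submodule.mem_span_singleton.mp hy2
          rcases eq_or_ne c 0 with rfl | hc
          · simp
          · have hxV' : x ∈ V := by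
              have h2 := V.smul_mem c⁻¹ hy1
              rwa [smul_smul, inv_mul_cancel₀ hc, one_smul] at h2
            exact absurd hxV' hxV
        have hsum := Submodule.finrank_sup_add_finrank_inf_eq V (Submodule.span (ZMod 2) {x})
        rw [hinf, finrank_bot, hVr, finrank_span_singleton hx0] at hsum
        omega
      · ext y
        simp only [Set.mem_inter_iff, Set.mem_empty_iff_false, iff_false, not_and,
          SetLike.mem_coe]
        intro hy hyS
        obtain ⟨v, hv, w, hw, rfl⟩ := Submodule.mem_sup.mp hy
        obtain ⟨c, rfl⟩ := Submodule.mem_span_singleton.mp hw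
        rcases eq_or_ne c 0 with rfl | hc
        · simp only [zero_smul, add_zero] at hyS
          exact (Set.eq_empty_iff_forall_notMem.mp hVS v) ⟨hv, hyS⟩
        · have hc1 : c = 1 := by
            fin_cases c
            · exact absurd rfl hc
            · rfl
          subst hc1
          rw [one_smul] at hyS
          apply hx
          refine ⟨(v + x, -v), ⟨Set.mem_insert_of_mem _ hyS, V.neg_mem hv⟩, ?_⟩
          show (v + x) + -v = x
          abel
  obtain ⟨V, hVr, hVS⟩ := main d le_rfl
  exact ⟨V, hVr.ge, hVS⟩
end

section
/- Let n, d ≥ 1 and suppose there exists a function c from the nonzero vectors of F_2^n to {red, blue} such that no d-dimensional linear subspace of F_2^n has all its nonzero vectors colored red and no 2-dimensional linear subspace has all its nonzero vectors colored blue. Then there exists a set S ⊆ F_2^n \ {0} such that S is sum-free, no d-dimensional linear subspace of F_2^n is contained in S + S, and no d-dimensional linear subspace of F_2^n is contained in the complement F_2^n \ S. -/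
open Pointwise

/-!
Take `S` to be the set of blue nonzero vectors. Over `𝔽₂` two distinct nonzero vectors `x, y`
span a plane whose nonzero vectors are exactly `x`, `y`, `x + y`, so the absence of a blue plane
makes `S` sum-free. Since `s + s = 0`, a nonzero element of `S + S` is a sum of two distinct
elements of `S`, hence lies outside `S` by sum-freeness. So a `d`-dimensional subspace inside
`S + S` or inside `Sᶜ` would be all red.
-/

def IsSumFree {α : Type*} [Add α] (S : Set α) : Prop :=
  ¬ ∃ x ∈ S, ∃ y ∈ S, x ≠ y ∧ x + y ∈ S

namespace ZMod2Module

variable {M : Type*} [AddCommGroup M] [Module (ZMod 2) M]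

theorem add_self (x : M) : x + x = 0 := by
  rw [← two_smul (ZMod 2), show (2 : ZMod 2) = 0 from rfl, zero_smul]

theorem eq_zero_or_eq_one (a : ZMod 2) : a = 0 ∨ a = 1 := by
  revert a; decide

theorem mem_span_pair {x y v : M} (hv : v ∈ Submodule.span (ZMod 2) {x, y}) :
    v = 0 ∨ v = x ∨ v = y ∨ v = x + y := by
  obtain ⟨a, b, rfl⟩ := Submodule.mem_span_pair.mp hv
  rcases eq_zero_or_eq_one a with rfl | rfl <;> rcases eq_zero_or_eq_one b with rfl | rfl <;>
    simp

theorem finrank_span_pair {x y : M} (hx : x ≠ 0) (hy : y ≠ 0) (hxy : x ≠ y) :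
    Module.finrank (ZMod 2) (Submodule.span (ZMod 2) {x, y}) = 2 := by
  have hli : LinearIndependent (ZMod 2) ![x, y] := by
    refine (LinearIndependent.pair_iff' hx).mpr fun a => ?_
    rcases eq_zero_or_eq_one a with rfl | rfl
    · simpa using hy.symm
    · simpa using hxy
  rw [← Matrix.range_cons_cons_empty x y ![], finrank_span_eq_card hli, Fintype.card_fin]

end ZMod2Module

section SumFree

open ZMod2Module

variable {M : Type*} [AddCommGroup M] [Module (ZMod 2) M]

theorem isSumFree_of_no_blue_plane (c : M → Bool)
    (hblue : ¬ ∃ W : Submodule (ZMod 2) M,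
        Module.finrank (ZMod 2) W = 2 ∧ ∀ v ∈ W, v ≠ 0 → c v = false) :
    IsSumFree {x : M | x ≠ 0 ∧ c x = false} := by
  rintro ⟨x, ⟨hx0, hxc⟩, y, ⟨hy0, hyc⟩, hxy, -, hsc⟩
  refine hblue ⟨_, finrank_span_pair hx0 hy0 hxy, fun v hv hv0 => ?_⟩
  rcases mem_span_pair hv with rfl | rfl | rfl | rfl
  exacts [absurd rfl hv0, hxc, hyc, hsc]

theorem IsSumFree.notMem_of_mem_add {S : Set M} (hS : IsSumFree S) {v : M} (hv : v ∈ S + S)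
    (hv0 : v ≠ 0) : v ∉ S := by
  obtain ⟨s, hs, t, ht, rfl⟩ := hv
  have hst : s ≠ t := by
    rintro rfl
    exact hv0 (add_self s)
  exact fun hvS => hS ⟨s, hs, t, ht, hst, hvS⟩

end SumFree

theorem stmt_11_general (n d : ℕ)
    (c : (Fin n → ZMod 2) → Bool)
    (hred : ¬ ∃ V : Submodule (ZMod 2) (Fin n → ZMod 2),
        Module.finrank (ZMod 2) V = d ∧ ∀ v ∈ V, v ≠ 0 → c v = true)
    (hblue : ¬ ∃ W : Submodule (ZMod 2) (Fin n → ZMod 2),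
        Module.finrank (ZMod 2) W = 2 ∧ ∀ v ∈ W, v ≠ 0 → c v = false) :
    ∃ S : Set (Fin n → ZMod 2),
      S ⊆ {x | x ≠ 0} ∧
      (¬ ∃ x ∈ S, ∃ y ∈ S, x ≠ y ∧ x + y ∈ S) ∧
      (¬ ∃ V : Submodule (ZMod 2) (Fin n → ZMod 2),
          Module.finrank (ZMod 2) V = d ∧ (V : Set (Fin n → ZMod 2)) ⊆ S + S) ∧
      (¬ ∃ V : Submodule (ZMod 2) (Fin n → ZMod 2),
          Module.finrank (ZMod 2) V = d ∧ (V : Set (Fin n → ZMod 2)) ⊆ Sᶜ) := by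
  set S : Set (Fin n → ZMod 2) := {x | x ≠ 0 ∧ c x = false}
  have hS : IsSumFree S := isSumFree_of_no_blue_plane c hblue
  have not_red : ∀ V : Submodule (ZMod 2) (Fin n → ZMod 2), Module.finrank (ZMod 2) V = d →
      ¬ ∀ v ∈ V, v ≠ 0 → v ∉ S := fun V hVd hVS =>
    hred ⟨V, hVd, fun v hv hv0 => by simpa [S, hv0] using hVS v hv hv0⟩
  refine ⟨S, fun x hx => hx.1, hS, ?_, ?_⟩
  · rintro ⟨V, hVd, hVS⟩
    exact not_red V hVd fun v hv hv0 => hS.notMem_of_mem_add (hVS hv) hv0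
  · rintro ⟨V, hVd, hVS⟩
    exact not_red V hVd fun v hv _ => hVS hv

/-- Observation 2.1: if there is a red-blue coloring of the nonzero vectors
of `F_2^n` (`true` = red, `false` = blue) with no all-red `d`-dimensional subspace and no
all-blue `2`-dimensional subspace, then there is a sum-free set `S ⊆ F_2^n \ {0}` such that
no `d`-dimensional subspace is contained in `S + S` and no `d`-dimensional subspace is
contained in the complement of `S`. -/
theorem stmt_11 (n d : ℕ) (hn : 1 ≤ n) (hd : 1 ≤ d)
    (c : (Fin n → ZMod 2) → Bool)
    (hred : ¬ ∃ V : Submodule (ZMod 2) (Fin n → ZMod 2),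
        Module.finrank (ZMod 2) V = d ∧ ∀ v ∈ V, v ≠ 0 → c v = true)
    (hblue : ¬ ∃ W : Submodule (ZMod 2) (Fin n → ZMod 2),
        Module.finrank (ZMod 2) W = 2 ∧ ∀ v ∈ W, v ≠ 0 → c v = false) :
    ∃ S : Set (Fin n → ZMod 2),
      S ⊆ {x | x ≠ 0} ∧
      (¬ ∃ x ∈ S, ∃ y ∈ S, x ≠ y ∧ x + y ∈ S) ∧
      (¬ ∃ V : Submodule (ZMod 2) (Fin n → ZMod 2),
          Module.finrank (ZMod 2) V = d ∧ (V : Set (Fin n → ZMod 2)) ⊆ S + S) ∧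
      (¬ ∃ V : Submodule (ZMod 2) (Fin n → ZMod 2),
          Module.finrank (ZMod 2) V = d ∧ (V : Set (Fin n → ZMod 2)) ⊆ Sᶜ) :=
  stmt_11_general n d c hred hblue
end

section
/- Let n, d ≥ 1 and suppose there exists a function c from the nonzero vectors of F_2^n to {red, blue} such that no d-dimensional linear subspace of F_2^n has all its nonzero vectors colored red and no 2-dimensional linear subspace has all its nonzero vectors colored blue. Then there exists a set S ⊆ F_2^n with |S|·2^d ≥ 2^n (i.e., μ(S) ≥ 2^{-d}) such that no d-dimensional linear subspace of F_2^n is contained in S + S. -/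
/-!
Let `B` be the set of blue vectors. Two distinct blue vectors `a, b` have a red sum, since
otherwise `{a, b, a + b}` is a blue plane, and `a + a = 0` is not blue; so `B + B` contains
no blue vector and every subspace inside `B + B` is red.

For the density, a red subspace `W` with `|W| (|B| + 1) < 2^n` extends: any `x` outside
`W ∪ (W + B)` makes `W ⊔ span {x} = W ∪ (x + W)` red. Iterating from `0`, the absence of a red
`d`-dimensional subspace forces `2^(d-1) (|B| + 1) ≥ 2^n`, hence `|B| 2^d ≥ 2^n` when `B ≠ ∅`.
If `B = ∅` every subspace is red, so there is no `d`-dimensional subspace at all and `S = F_2^n`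
works.
-/

open Pointwise

section

open Module Submodule

variable {V : Type*} [AddCommGroup V] [Module (ZMod 2) V]

lemma zmod_two_eq_zero_or_one (s : ZMod 2) : s = 0 ∨ s = 1 := by revert s; decide

lemma finrank_span_pair_eq_two {a b : V} (ha : a ≠ 0) (hb : b ≠ 0) (hab : a ≠ b) :
    finrank (ZMod 2) (span (ZMod 2) {a, b}) = 2 := by
  have hind : LinearIndepOn (ZMod 2) id {a, b} := linearIndepOn_id_pair ha fun s => by
    rcases zmod_two_eq_zero_or_one s with rfl | rfl <;> simp [hb.symm, hab]
  classical
  rw [finrank_span_set_eq_card hind, Set.toFinset_insert, Set.toFinset_singleton,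
    Finset.card_pair hab]

lemma add_eq_true_of_eq_false (c : V → Bool)
    (hblue : ¬ ∃ W : Submodule (ZMod 2) V, finrank (ZMod 2) W = 2 ∧ ∀ v ∈ W, v ≠ 0 → c v = false)
    {a b : V} (ha : a ≠ 0) (hb : b ≠ 0) (hab : a ≠ b) (hca : c a = false) (hcb : c b = false) :
    c (a + b) = true := by
  by_contra hcab
  refine hblue ⟨span (ZMod 2) {a, b}, finrank_span_pair_eq_two ha hb hab, fun v hv _ => ?_⟩
  obtain ⟨s, t, rfl⟩ := mem_span_pair.1 hv
  rcases zmod_two_eq_zero_or_one s with rfl | rfl <;>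
    rcases zmod_two_eq_zero_or_one t with rfl | rfl <;> simp_all

variable [Finite V]

lemma exists_finrank_succ_disjoint {W : Submodule (ZMod 2) V} {B : Set V}
    (hWB : Disjoint (W : Set V) B) (hcard : Nat.card W * (B.ncard + 1) < Nat.card V) :
    ∃ W' : Submodule (ZMod 2) V,
      finrank (ZMod 2) W' = finrank (ZMod 2) W + 1 ∧ Disjoint (W' : Set V) B := by
  have hT : ((W : Set V) ∪ (W + B)).ncard < Nat.card V := calc
    _ ≤ (W : Set V).ncard + ((W : Set V) + B).ncard := Set.ncard_union_le _ _
    _ ≤ Nat.card W + Nat.card W * B.ncard := by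
      rw [← Nat.card_coe_set_eq (W : Set V), SetLike.coe_sort_coe]
      exact Nat.add_le_add_left Set.natCard_add_le _
    _ = Nat.card W * (B.ncard + 1) := by ring
    _ < Nat.card V := hcard
  obtain ⟨x, hx⟩ : ∃ x, x ∉ (W : Set V) ∪ (W + B) := by
    by_contra! h
    simp [Set.eq_univ_of_forall h] at hT
  obtain ⟨hxW, hxWB⟩ := not_or.1 hx
  refine ⟨W ⊔ span (ZMod 2) {x}, finrank_sup_span_singleton hxW, ?_⟩
  rw [Set.disjoint_left]
  intro v hv hvB
  obtain ⟨w, hw, y, hy, rfl⟩ := mem_sup.1 hv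
  obtain ⟨s, rfl⟩ := mem_span_singleton.1 hy
  rcases zmod_two_eq_zero_or_one s with rfl | rfl
  · exact Set.disjoint_left.1 hWB (by simpa using hw) (by simpa using hvB)
  · exact hxWB (Set.mem_add.2 ⟨-w, neg_mem hw, w + 1 • x, hvB, by simp⟩)

/-- The hypothesis is `2^(d-1) (|B| + 1) < |V|`, doubled to avoid truncated subtraction. -/
lemma exists_finrank_eq_disjoint {B : Set V} (hB : (0 : V) ∉ B) :
    ∀ d : ℕ, (B.ncard + 1) * 2 ^ d < 2 * Nat.card V →
      ∃ W : Submodule (ZMod 2) V, finrank (ZMod 2) W = d ∧ Disjoint (W : Set V) B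
  | 0, _ => ⟨⊥, finrank_bot _ _, by simpa using hB⟩
  | d + 1, hcard => by
    obtain ⟨W, hW, hWB⟩ := exists_finrank_eq_disjoint hB d (by rw [pow_succ] at hcard; linarith)
    have hWcard : Nat.card W = 2 ^ d := by
      rw [natCard_eq_pow_finrank (K := ZMod 2), hW, Nat.card_zmod]
    rw [← hW]
    exact exists_finrank_succ_disjoint hWB (by rw [hWcard, pow_succ] at *; linarith)

end

theorem stmt_12_general (n d : ℕ)
    (c : (Fin n → ZMod 2) → Bool)
    (hred : ¬ ∃ V : Submodule (ZMod 2) (Fin n → ZMod 2),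
        Module.finrank (ZMod 2) V = d ∧ ∀ v ∈ V, v ≠ 0 → c v = true)
    (hblue : ¬ ∃ W : Submodule (ZMod 2) (Fin n → ZMod 2),
        Module.finrank (ZMod 2) W = 2 ∧ ∀ v ∈ W, v ≠ 0 → c v = false) :
    ∃ S : Set (Fin n → ZMod 2),
      S.ncard * 2 ^ d ≥ 2 ^ n ∧
      (¬ ∃ V : Submodule (ZMod 2) (Fin n → ZMod 2),
          Module.finrank (ZMod 2) V = d ∧ (V : Set (Fin n → ZMod 2)) ⊆ S + S) := by
  set B : Set (Fin n → ZMod 2) := {v | v ≠ 0 ∧ c v = false}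
  have red_of_disjoint (V : Submodule (ZMod 2) (Fin n → ZMod 2)) (hV : Disjoint (V : Set _) B) :
      ∀ v ∈ V, v ≠ 0 → c v = true := fun v hv hv0 => by
    simpa [B, hv0] using Set.disjoint_left.1 hV hv
  have hBB : Disjoint (B + B) B := by
    rw [Set.disjoint_left]
    rintro _ ⟨a, ⟨ha, hca⟩, b, ⟨hb, hcb⟩, rfl⟩ ⟨hab0, hcab⟩
    obtain rfl | hab := eq_or_ne a b
    · exact hab0 (ZModModule.add_self a)
    · simp [add_eq_true_of_eq_false c hblue ha hb hab hca hcb] at hcab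
  rcases B.eq_empty_or_nonempty with hB | hB
  · refine ⟨Set.univ, by simp [Nat.one_le_two_pow], fun ⟨V, hV, _⟩ => ?_⟩
    exact hred ⟨V, hV, red_of_disjoint V (by simp [hB])⟩
  refine ⟨B, ?_, fun ⟨V, hV, hVB⟩ => hred ⟨V, hV, red_of_disjoint V (hBB.mono_left hVB)⟩⟩
  have hcard : 2 * 2 ^ n ≤ (B.ncard + 1) * 2 ^ d := by
    by_contra! h
    obtain ⟨W, hW, hWB⟩ := exists_finrank_eq_disjoint (B := B) (by simp [B]) d (by simpa using h)
    exact hred ⟨W, hW, red_of_disjoint W hWB⟩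
  have hB1 : 1 ≤ B.ncard := (Set.ncard_pos).2 hB
  nlinarith [Nat.mul_le_mul_right (2 ^ d) hB1]

/-- Observation 2.3: if there is a red-blue coloring of the nonzero vectors
of `F_2^n` (`true` = red, `false` = blue) with no all-red `d`-dimensional subspace and no
all-blue `2`-dimensional subspace, then there is a set `S ⊆ F_2^n` with `|S|·2^d ≥ 2^n`
(i.e. `μ(S) ≥ 2^{-d}`) such that no `d`-dimensional subspace is contained in `S + S`. -/
theorem stmt_12 (n d : ℕ) (hn : 1 ≤ n) (hd : 1 ≤ d)
    (c : (Fin n → ZMod 2) → Bool)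
    (hred : ¬ ∃ V : Submodule (ZMod 2) (Fin n → ZMod 2),
        Module.finrank (ZMod 2) V = d ∧ ∀ v ∈ V, v ≠ 0 → c v = true)
    (hblue : ¬ ∃ W : Submodule (ZMod 2) (Fin n → ZMod 2),
        Module.finrank (ZMod 2) W = 2 ∧ ∀ v ∈ W, v ≠ 0 → c v = false) :
    ∃ S : Set (Fin n → ZMod 2),
      S.ncard * 2 ^ d ≥ 2 ^ n ∧
      (¬ ∃ V : Submodule (ZMod 2) (Fin n → ZMod 2),
          Module.finrank (ZMod 2) V = d ∧ (V : Set (Fin n → ZMod 2)) ⊆ S + S) :=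
  stmt_12_general n d c hred hblue
end

section
/- For every prime p and every ε ∈ (0,1) there exists n_0 (depending on p and ε) such that for all n ≥ n_0 the following holds: if A_1, …, A_r ⊆ F_p^n are sum-free sets whose union contains all nonzero vectors of F_p^n, then r > n^{1−ε}. -/
open Finset

def schurBound : ℕ → ℕ
  | 0 => 2
  | (r+1) => (r+1) * schurBound r + 2

theorem ramsey_triangle {V C : Type*} [LinearOrder V] [DecidableEq C] (c : V → V → C) :
    ∀ (r : ℕ) (S : Finset C), S.card = r → ∀ (T : Finset V),
      schurBound r ≤ T.card →
      (∀ i ∈ T, ∀ j ∈ T, i < j → c i j ∈ S) →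
      ∃ i ∈ T, ∃ j ∈ T, ∃ k ∈ T, i < j ∧ j < k ∧ c i j = c j k ∧ c j k = c i k := by
  intro r
  induction r with
  | zero =>
    intro S hS T hT hc
    rw [Finset.card_eq_zero] at hS
    subst hS
    have h2 : schurBound 0 = 2 := rfl
    obtain ⟨a, ha, b, hb, hab⟩ := Finset.one_lt_card.mp (by omega : 1 < T.card)
    rcases hab.lt_or_gt with h | h
    · exact absurd (hc a ha b hb h) (Finset.notMem_empty _)
    · exact absurd (hc b hb a ha h) (Finset.notMem_empty _)
  | succ r ih =>
    intro S hS T hT hc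
    have hsb : schurBound (r+1) = (r+1) * schurBound r + 2 := rfl
    rw [hsb] at hT
    have hTne : T.Nonempty := Finset.card_pos.mp (by omega)
    set v := T.min' hTne with hv
    have hvT : v ∈ T := T.min'_mem hTne
    set T' := T.erase v with hT'
    have hT'card : S.card * schurBound r < T'.card := by
      have h1 : T'.card = T.card - 1 := Finset.card_erase_of_mem hvT
      rw [hS]
      omega
    have hmaps : ∀ j ∈ T', c v j ∈ S := by
      intro j hj
      exact hc v hvT j (Finset.mem_of_mem_erase hj) (T.min'_lt_of_mem_erase_min' hTne hj)
    obtain ⟨a, haS, hacard⟩ := Finset.exists_lt_card_fiber_of_mul_lt_card_of_maps_to hmaps hT'card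
    set U := T'.filter (fun j => c v j = a) with hU
    have hUsub : U ⊆ T := fun x hx => Finset.mem_of_mem_erase (Finset.mem_filter.mp hx).1
    by_cases hcase : ∃ j ∈ U, ∃ k ∈ U, j < k ∧ c j k = a
    · obtain ⟨j, hj, k, hk, hjk, hcjk⟩ := hcase
      refine ⟨v, hvT, j, hUsub hj, k, hUsub hk, ?_, hjk, ?_, ?_⟩
      · exact T.min'_lt_of_mem_erase_min' hTne (Finset.mem_filter.mp hj).1
      · rw [(Finset.mem_filter.mp hj).2, hcjk]
      · rw [hcjk, (Finset.mem_filter.mp hk).2]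
    · push_neg at hcase
      have hS' : (S.erase a).card = r := by
        rw [Finset.card_erase_of_mem haS, hS]; omega
      obtain ⟨i, hi, j, hj, k, hk, h1, h2, h3, h4⟩ :=
        ih (S.erase a) hS' U (le_of_lt hacard) (fun i hi j hj hij =>
          Finset.mem_erase.mpr ⟨hcase i hi j hj hij, hc i (hUsub hi) j (hUsub hj) hij⟩)
      exact ⟨i, hUsub hi, j, hUsub hj, k, hUsub hk, h1, h2, h3, h4⟩

theorem schurBound_le (r : ℕ) : schurBound r ≤ 4 * (r+1)^(r+1) := by
  induction r with
  | zero => simp [schurBound]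
  | succ r ih =>
    have h1 : schurBound (r+1) = (r+1) * schurBound r + 2 := rfl
    rw [h1]
    have h2 : (r+1) * schurBound r ≤ (r+1) * (4 * (r+1)^(r+1)) :=
      Nat.mul_le_mul_left _ ih
    have h3 : (r+1) * (4 * (r+1)^(r+1)) = 4 * (r+1)^(r+2) := by ring
    have h4 : (r+1)^(r+2) + 1 ≤ (r+2)^(r+2) := by
      have := Nat.pow_lt_pow_left (by omega : r+1 < r+2) (by omega : r+2 ≠ 0)
      omega
    calc (r+1) * schurBound r + 2 ≤ 4 * (r+1)^(r+2) + 2 := by omega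
      _ ≤ 4 * ((r+1)^(r+2) + 1) := by omega
      _ ≤ 4 * (r+2)^(r+2) := by
          exact Nat.mul_le_mul_left _ h4

theorem cover_bound {G : Type*} [AddCommGroup G] [Fintype G] {r : ℕ}
    (A : Fin r → Set G)
    (hsf : ∀ i, ¬ ∃ x ∈ A i, ∃ y ∈ A i, ∃ z ∈ A i, x + y = z)
    (hcov : ∀ v : G, v ≠ 0 → ∃ i, v ∈ A i) :
    Fintype.card G < schurBound r := by
  classical
  by_contra hcon
  push_neg at hcon
  rcases Nat.eq_zero_or_pos r with hr | hr
  · -- r = 0 : every element is 0, so card ≤ 1 < 2 ≤ schurBound 0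
    subst hr
    have hone : ∀ v : G, v = 0 := by
      intro v
      by_contra hv
      obtain ⟨i, _⟩ := hcov v hv
      exact i.elim0
    have : Fintype.card G ≤ 1 := Fintype.card_le_one_iff.mpr (fun a b => by rw [hone a, hone b])
    have h2 : schurBound 0 = 2 := rfl
    omega
  · choose col hcol using hcov
    let e : Fin (Fintype.card G) ≃ G := (Fintype.equivFin G).symm
    let c : Fin (Fintype.card G) → Fin (Fintype.card G) → Fin r :=
      fun i j => if h : e j - e i ≠ 0 then col _ h else ⟨0, hr⟩
    obtain ⟨i, -, j, -, k, -, hij, hjk, h1, h2⟩ :=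
      ramsey_triangle c r (Finset.univ : Finset (Fin r)) (by simp) Finset.univ
        (by simpa using hcon) (fun _ _ _ _ _ => Finset.mem_univ _)
    have hne : ∀ {a b : Fin (Fintype.card G)}, a < b → e b - e a ≠ 0 := by
      intro a b hab
      simp only [sub_ne_zero]
      exact fun h => hab.ne' (e.injective h)
    have hx := hne hij
    have hy := hne hjk
    have hz := hne (hij.trans hjk)
    have hcij : c i j = col _ hx := dif_pos hx
    have hcjk : c j k = col _ hy := dif_pos hy
    have hcik : c i k = col _ hz := dif_pos hz
    refine hsf (c i j) ⟨e j - e i, ?_, e k - e j, ?_, e k - e i, ?_, by abel⟩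
    · rw [hcij]; exact hcol _ hx
    · rw [h1, hcjk]; exact hcol _ hy
    · rw [h1, h2, hcik]; exact hcol _ hz

open Filter Asymptotics in
theorem eventually_key (ε : ℝ) (hε0 : 0 < ε) (hε1 : ε < 1) :
    ∀ᶠ x : ℝ in atTop,
      Real.log 4 + (x ^ (1 - ε) + 1) * Real.log (2 * x) < x * Real.log 2 := by
  have hlog2 : (0:ℝ) < Real.log 2 := Real.log_pos one_lt_two
  -- log (2x) = log 2 + log x eventually
  have heq : (fun x : ℝ => Real.log (2 * x)) =ᶠ[atTop]
      fun x => Real.log 2 + Real.log x := by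
    filter_upwards [eventually_gt_atTop (0:ℝ)] with x hx
    rw [Real.log_mul (by norm_num) hx.ne']
  have hA : (fun x : ℝ => Real.log (2 * x)) =o[atTop] fun x => x ^ ε := by
    refine IsLittleO.congr' ?_ heq.symm EventuallyEq.rfl
    have hconst : (fun _ : ℝ => Real.log 2) =o[atTop] fun x : ℝ => x ^ ε := by
      refine isLittleO_const_left.mpr (Or.inr ?_)
      exact tendsto_abs_atTop_atTop.comp (tendsto_rpow_atTop hε0)
    exact hconst.add (isLittleO_log_rpow_atTop hε0)
  have hB : (fun x : ℝ => x ^ (1 - ε) * Real.log (2 * x)) =o[atTop] (id : ℝ → ℝ) := by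
    have := (isBigO_refl (fun x : ℝ => x ^ (1 - ε)) atTop).mul_isLittleO hA
    refine this.congr' EventuallyEq.rfl ?_
    filter_upwards [eventually_gt_atTop (0:ℝ)] with x hx
    rw [← Real.rpow_add hx]
    norm_num
  have hC : (fun x : ℝ => Real.log (2 * x)) =o[atTop] (id : ℝ → ℝ) := by
    refine hA.trans_isBigO (IsBigO.of_bound 1 ?_)
    filter_upwards [eventually_ge_atTop (1:ℝ)] with x hx
    have h1 : x ^ ε ≤ x ^ (1:ℝ) := Real.rpow_le_rpow_of_exponent_le hx hε1.le
    simp only [Real.norm_eq_abs, id_eq, Real.rpow_one] at h1 ⊢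
    rw [abs_of_nonneg (by positivity : (0:ℝ) ≤ x ^ ε), abs_of_nonneg (by linarith)]
    exact h1.trans (by linarith)
  have hG : (fun x : ℝ => Real.log 4 + (x ^ (1 - ε) + 1) * Real.log (2 * x))
      =o[atTop] (id : ℝ → ℝ) := by
    have hsum := ((isLittleO_const_id_atTop (Real.log 4)).add hB).add hC
    refine hsum.congr' ?_ EventuallyEq.rfl
    filter_upwards [] with x
    ring
  rw [isLittleO_iff] at hG
  have hc : (0:ℝ) < Real.log 2 / 2 := by linarith
  filter_upwards [hG hc, eventually_ge_atTop (1:ℝ)] with x hx h1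
  have h2 : |x| = x := abs_of_nonneg (by linarith)
  simp only [Real.norm_eq_abs, id_eq, h2] at hx
  have h3 : Real.log 4 + (x ^ (1 - ε) + 1) * Real.log (2 * x) ≤ Real.log 2 / 2 * x :=
    (le_abs_self _).trans hx
  nlinarith

theorem key_ineq (p n r : ℕ) (hp : 2 ≤ p) (hn : 1 ≤ n) {ε : ℝ} (hε0 : 0 < ε) (hε1 : ε < 1)
    (hineq : Real.log 4 + ((n:ℝ)^(1-ε)+1) * Real.log (2*(n:ℝ)) < (n:ℝ) * Real.log 2)
    (hbound : p^n < 4*(r+1)^(r+1)) : (r : ℝ) > (n:ℝ)^(1-ε) := by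
  by_contra hcon
  push_neg at hcon
  have hn1 : (1:ℝ) ≤ (n:ℝ) := by exact_mod_cast hn
  have hnle : (n:ℝ)^(1-ε) ≤ (n:ℝ) := by
    calc (n:ℝ)^(1-ε) ≤ (n:ℝ)^(1:ℝ) := Real.rpow_le_rpow_of_exponent_le hn1 (by linarith)
    _ = (n:ℝ) := Real.rpow_one _
  have hrpos : (0:ℝ) ≤ (n:ℝ)^(1-ε) := Real.rpow_nonneg (by positivity) _
  have hr2n : (r:ℝ) + 1 ≤ 2*(n:ℝ) := by linarith
  have c1 : (n:ℝ) * Real.log 2 ≤ (n:ℝ) * Real.log p :=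
    mul_le_mul_of_nonneg_left (Real.log_le_log two_pos (by exact_mod_cast hp)) (by positivity)
  have c2 : (n:ℝ) * Real.log p = Real.log ((p:ℝ)^n) := by rw [Real.log_pow]
  have c3 : Real.log ((p:ℝ)^n) ≤ Real.log (4*((r:ℝ)+1)^(r+1)) := by
    apply Real.log_le_log (by positivity)
    have h := hbound.le
    have h2 : ((p^n : ℕ) : ℝ) ≤ ((4*(r+1)^(r+1) : ℕ) : ℝ) := by exact_mod_cast h
    push_cast at h2
    exact h2
  have c4 : Real.log (4*((r:ℝ)+1)^(r+1)) = Real.log 4 + ((r:ℝ)+1) * Real.log ((r:ℝ)+1) := by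
    rw [Real.log_mul (by norm_num) (by positivity), Real.log_pow]
    push_cast
    ring
  have c5 : ((r:ℝ)+1) * Real.log ((r:ℝ)+1) ≤ ((n:ℝ)^(1-ε)+1) * Real.log (2*(n:ℝ)) := by
    apply mul_le_mul (by linarith) (Real.log_le_log (by positivity) hr2n)
      (Real.log_nonneg (by linarith)) (by linarith)
  linarith


/-- for every prime `p` and every `ε ∈ (0,1)` there is `n₀` such that for all
`n ≥ n₀`: if `A_1, …, A_r ⊆ F_p^n` are sum-free sets (no `x, y, z ∈ S` with `x + y = z`)
whose union contains all nonzero vectors of `F_p^n`, then `r > n^{1−ε}`. -/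
theorem stmt_18 (p : ℕ) (hp : p.Prime) (ε : ℝ) (hε0 : 0 < ε) (hε1 : ε < 1) :
    ∃ n₀ : ℕ, ∀ n : ℕ, n₀ ≤ n →
      ∀ r : ℕ, ∀ A : Fin r → Set (Fin n → ZMod p),
        (∀ i, ¬ ∃ x ∈ A i, ∃ y ∈ A i, ∃ z ∈ A i, x + y = z) →
        (∀ v : Fin n → ZMod p, v ≠ 0 → ∃ i, v ∈ A i) →
        (r : ℝ) > (n : ℝ) ^ (1 - ε) := by
  haveI : NeZero p := ⟨hp.pos.ne'⟩
  have hev : ∀ᶠ n : ℕ in Filter.atTop, 1 ≤ n ∧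
      Real.log 4 + ((n:ℝ)^(1-ε)+1) * Real.log (2*(n:ℝ)) < (n:ℝ) * Real.log 2 := by
    refine (Filter.eventually_ge_atTop 1).and ?_
    exact tendsto_natCast_atTop_atTop.eventually (eventually_key ε hε0 hε1)
  obtain ⟨n₀, hn₀⟩ := Filter.eventually_atTop.mp hev
  refine ⟨n₀, fun n hn r A hsf hcov => ?_⟩
  obtain ⟨hn1, hineq⟩ := hn₀ n hn
  have hcard := cover_bound A hsf hcov
  have hcardeq : Fintype.card (Fin n → ZMod p) = p^n := by
    simp [ZMod.card p]
  rw [hcardeq] at hcard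
  have hb : p^n < 4*(r+1)^(r+1) := lt_of_lt_of_le hcard (schurBound_le r)
  exact key_ineq p n r hp.two_le hn1 hε0 hε1 hineq hb
end
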